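/- Let X be a tree with vertex set V, let c : ℕ → V be a geodesic ray, and let g be an automorphism of X such that the intersection of the images of c and g ∘ c is infinite. Then there is a unique integer t such that for some N ∈ ℕ one has g(c(k)) = c(k + t) for all k ≥ N (with k + t ≥ 0 for such k). -/
import Mathlib

private lemma iso_dist_le' {V : Type*} {G : SimpleGraph V} (hconn : G.Connected)
    (g : G ≃g G) (u v : V) : G.dist (g u) (g v) ≤ G.dist u v := by
  obtain ⟨p, hp⟩ := hconn.exists_walk_length_eq_dist u v
  calc G.dist (g u) (g v) ≤ (p.map g.toHom).length := SimpleGraph.dist_le _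
    _ = G.dist u v := by rw [SimpleGraph.Walk.length_map, hp]

private lemma iso_dist' {V : Type*} {G : SimpleGraph V} (hconn : G.Connected)
    (g : G ≃g G) (u v : V) : G.dist (g u) (g v) = G.dist u v := by
  refine le_antisymm (iso_dist_le' hconn g u v) ?_
  have := iso_dist_le' hconn g.symm (g u) (g v)
  simpa using this

private lemma tree_mid' {V : Type*} {G : SimpleGraph V} (hconn : G.Connected)
    (hacyc : G.IsAcyclic) {a b x y : V} {m n : ℕ}
    (hab : G.dist a b = m + n)
    (hax : G.dist a x = m) (hxb : G.dist x b = n)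
    (hay : G.dist a y = m) (hyb : G.dist y b = n) : x = y := by
  obtain ⟨p, hp⟩ := hconn.exists_walk_length_eq_dist a x
  obtain ⟨q, hq⟩ := hconn.exists_walk_length_eq_dist x b
  obtain ⟨r, hr⟩ := hconn.exists_walk_length_eq_dist a y
  obtain ⟨s, hs⟩ := hconn.exists_walk_length_eq_dist y b
  have h1 : (p.append q).length = G.dist a b := by
    rw [SimpleGraph.Walk.length_append, hp, hq, hax, hxb, hab]
  have h2 : (r.append s).length = G.dist a b := by
    rw [SimpleGraph.Walk.length_append, hr, hs, hay, hyb, hab]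
  have hp1 : (p.append q).IsPath := SimpleGraph.Walk.isPath_of_length_eq_dist _ h1
  have hp2 : (r.append s).IsPath := SimpleGraph.Walk.isPath_of_length_eq_dist _ h2
  have heq : p.append q = r.append s :=
    congrArg Subtype.val (hacyc.path_unique ⟨p.append q, hp1⟩ ⟨r.append s, hp2⟩)
  have hx : (p.append q).getVert m = x := by
    rw [SimpleGraph.Walk.getVert_append, hp, hax]
    simp
  have hy : (r.append s).getVert m = y := by
    rw [SimpleGraph.Walk.getVert_append, hr, hay]
    simp
  rw [← hx, heq, hy]

/-- If an automorphism `g` of a tree fixes the end of a geodesic ray `c` (the images of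
`c` and `g ∘ c` intersect in an infinite set), then there is a unique integer `t` such
that `g (c k) = c (k + t)` for all sufficiently large `k`. -/
theorem stmt_15 {V : Type*} (G : SimpleGraph V) (hconn : G.Connected) (hacyc : G.IsAcyclic)
    (c : ℕ → V) (hc : ∀ i j : ℕ, G.dist (c i) (c j) = ((i : ℤ) - (j : ℤ)).natAbs)
    (g : G ≃g G)
    (hfix : (Set.range c ∩ Set.range (⇑g ∘ c)).Infinite) :
    ∃! t : ℤ, ∃ N : ℕ, ∀ k ≥ N, 0 ≤ (k : ℤ) + t ∧ g (c k) = c ((k : ℤ) + t).toNat := by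
  -- c is injective
  have hcinj : Function.Injective c := by
    intro i j h
    have h2 := hc i j
    rw [h, SimpleGraph.dist_self] at h2
    omega
  -- distances between vertices on the ray and their images
  have key : ∀ i j i' j' : ℕ, g (c i) = c j → g (c i') = c j' →
      ((j : ℤ) - j').natAbs = ((i : ℤ) - i').natAbs := by
    intro i j i' j' h h'
    have hd := iso_dist' hconn g (c i) (c i')
    rw [h, h', hc j j', hc i i'] at hd
    exact hd
  -- the set of indices i with g (c i) in the range of c is infinite
  have hI : {i : ℕ | ∃ j : ℕ, g (c i) = c j}.Infinite := by
    have hsub : Set.range c ∩ Set.range (⇑g ∘ c) ⊆ Set.range (⇑g ∘ c) :=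
      Set.inter_subset_right
    have hpre := hfix.preimage (f := ⇑g ∘ c) hsub
    refine hpre.mono ?_
    intro i hi
    obtain ⟨⟨j, hj⟩, -⟩ := hi
    exact ⟨j, hj.symm⟩
  obtain ⟨i₀, ⟨j₀, hij₀⟩⟩ := hI.nonempty
  set t : ℤ := (j₀ : ℤ) - i₀ with ht
  -- every matched pair has the same offset t
  have hoff : ∀ i j : ℕ, g (c i) = c j → (j : ℤ) - i = t := by
    intro i₁ j₁ h₁
    obtain ⟨i, hi, hlt⟩ := hI.exists_gt (max (i₀ + j₀) (i₁ + j₁))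
    obtain ⟨j, hj⟩ := hi
    have k0 := key i j i₀ j₀ hj hij₀
    have k1 := key i j i₁ j₁ hj h₁
    omega
  refine ⟨t, ⟨i₀, ?_⟩, ?_⟩
  · intro k hk
    have hkt : 0 ≤ (k : ℤ) + t := by omega
    refine ⟨hkt, ?_⟩
    -- find a matched pair beyond k
    obtain ⟨i, hi, hlt⟩ := hI.exists_gt k
    obtain ⟨j, hj⟩ := hi
    have hji : (j : ℤ) - i = t := hoff i j hj
    -- apply midpoint uniqueness with a = c j₀, b = c j
    have hd1 : G.dist (c j₀) (g (c k)) = k - i₀ := by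
      have := iso_dist' hconn g (c i₀) (c k)
      rw [hij₀, hc i₀ k] at this
      rw [this]
      omega
    have hd2 : G.dist (g (c k)) (c j) = i - k := by
      have := iso_dist' hconn g (c k) (c i)
      rw [hj, hc k i] at this
      rw [this]
      omega
    have hdab : G.dist (c j₀) (c j) = (k - i₀) + (i - k) := by
      rw [hc j₀ j]
      omega
    have hd3 : G.dist (c j₀) (c (((k : ℤ) + t).toNat)) = k - i₀ := by
      rw [hc]
      omega
    have hd4 : G.dist (c (((k : ℤ) + t).toNat)) (c j) = i - k := by
      rw [hc]
      omega
    exact tree_mid' hconn hacyc hdab hd1 hd2 hd3 hd4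
  · intro t' ht'
    obtain ⟨N', hN'⟩ := ht'
    -- compare at a large k using a matched pair
    obtain ⟨i, hi, hlt⟩ := hI.exists_gt N'
    obtain ⟨j, hj⟩ := hi
    have hji : (j : ℤ) - i = t := hoff i j hj
    obtain ⟨hnn, heq⟩ := hN' i (le_of_lt hlt)
    rw [hj] at heq
    have := hcinj heq
    omega
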